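/- Gateway Lemma: Let α be a program built from atomic programs using ; and ∩ that contains at least one occurrence of ;. Let A be a Kripke structure that is a minimal witness graph for u →α w, and let v be a node distinct from u and w such that every path of positive length from u to w passes through v. Then there exist programs β₁, β₂ with R_{β₁;β₂} ⊆ R_α (in every structure), u →β₁ v and v →β₂ w. -/
import Mathlib


mutual
inductive Formula (P R : Type) : Type
  | atom : P → Formula P R
  | tt : Formula P R
  | or : Formula P R → Formula P R → Formula P R
  | neg : Formula P R → Formula P R
  | dia : Program P R → Formula P R → Formula P R
inductive Program (P R : Type) : Type
  | atom : R → Program P R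
  | seq : Program P R → Program P R → Program P R
  | union : Program P R → Program P R → Program P R
  | inter : Program P R → Program P R → Program P R
  | test : Formula P R → Program P R
end

structure Kripke (P R W : Type) where
  val : P → W → Prop
  rel : R → W → W → Prop

mutual
def Sat {P R W : Type} (A : Kripke P R W) : W → Formula P R → Prop
  | u, .atom p => A.val p u
  | _, .tt => True
  | u, .or φ ψ => Sat A u φ ∨ Sat A u ψ
  | u, .neg φ => ¬ Sat A u φ
  | u, .dia α φ => ∃ v, PRel A α u v ∧ Sat A v φ
def PRel {P R W : Type} (A : Kripke P R W) : Program P R → W → W → Prop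
  | .atom a, u, v => A.rel a u v
  | .seq α β, u, v => ∃ w, PRel A α u w ∧ PRel A β w v
  | .union α β, u, v => PRel A α u v ∨ PRel A β u v
  | .inter α β, u, v => PRel A α u v ∧ PRel A β u v
  | .test φ, u, v => u = v ∧ Sat A u φ
end

def Formula.ff {P R : Type} : Formula P R := .neg .tt
def Formula.conj {P R : Type} (φ ψ : Formula P R) : Formula P R := .neg (.or (.neg φ) (.neg ψ))
def Formula.imp {P R : Type} (φ ψ : Formula P R) : Formula P R := .or (.neg φ) ψ
def Formula.iff {P R : Type} (φ ψ : Formula P R) : Formula P R := (φ.imp ψ).conj (ψ.imp φ)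
def Formula.box {P R : Type} (α : Program P R) (φ : Formula P R) : Formula P R := .neg (.dia α (.neg φ))
def Program.loop {P R : Type} (α : Program P R) : Program P R := .inter α (.test .tt)

/-- Programs built from atomic programs using only `;` and `∩`. -/
inductive InterSeq {P R : Type} : Program P R → Prop
  | atom (a : R) : InterSeq (.atom a)
  | seq {α β : Program P R} : InterSeq α → InterSeq β → InterSeq (α.seq β)
  | inter {α β : Program P R} : InterSeq α → InterSeq β → InterSeq (α.inter β)

/-- The program contains at least one occurrence of the `;`-operator. -/
inductive HasSeq {P R : Type} : Program P R → Prop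
  | seq (α β : Program P R) : HasSeq (α.seq β)
  | interL {α : Program P R} (β : Program P R) : HasSeq α → HasSeq (α.inter β)
  | interR (α : Program P R) {β : Program P R} : HasSeq β → HasSeq (α.inter β)

/-- Witness graphs for `u →α v` in `A`, given as a set of nodes and a set of labelled edges. -/
inductive WG {P R W : Type} (A : Kripke P R W) :
    Program P R → W → W → Set W → Set (R × W × W) → Prop
  | atom {a : R} {u v : W} : A.rel a u v → WG A (.atom a) u v {u, v} {(a, u, v)}
  | test {φ : Formula P R} {u : W} : Sat A u φ → WG A (.test φ) u u {u} ∅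
  | seq {α β : Program P R} {u v w : W} {N₁ E₁ N₂ E₂} :
      WG A α u w N₁ E₁ → WG A β w v N₂ E₂ → WG A (α.seq β) u v (N₁ ∪ N₂) (E₁ ∪ E₂)
  | inter {α β : Program P R} {u v : W} {N₁ E₁ N₂ E₂} :
      WG A α u v N₁ E₁ → WG A β u v N₂ E₂ → WG A (α.inter β) u v (N₁ ∪ N₂) (E₁ ∪ E₂)
  | unionL {α β : Program P R} {u v : W} {N E} :
      WG A α u v N E → WG A (α.union β) u v N E
  | unionR {α β : Program P R} {u v : W} {N E} :
      WG A β u v N E → WG A (α.union β) u v N E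

/-- One step along some atomic edge of `A`. -/
def Step {P R W : Type} (A : Kripke P R W) (x y : W) : Prop := ∃ a, A.rel a x y

section Aux
variable {P R W : Type}

lemma wg_prel {A : Kripke P R W} {α : Program P R} {u v : W} {N E}
    (h : WG A α u v N E) : PRel A α u v := by
  induction h with
  | atom h => exact h
  | test h => exact ⟨rfl, h⟩
  | seq _ _ ih1 ih2 => exact ⟨_, ih1, ih2⟩
  | inter _ _ ih1 ih2 => exact ⟨ih1, ih2⟩
  | unionL _ ih => exact Or.inl ih
  | unionR _ ih => exact Or.inr ih

lemma chain_append' {s : W → W → Prop} :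
    ∀ {l1 : List W} {x m : W} {l2 : List W}, List.Chain s x l1 →
      l1.getLast? = some m → List.Chain s m l2 → List.Chain s x (l1 ++ l2) := by
  intro l1
  induction l1 with
  | nil => intro x m l2 _ h; simp at h
  | cons a l ih =>
    intro x m l2 h1 h2 h3
    rcases List.chain_cons.mp h1 with ⟨hxa, hal⟩
    cases l with
    | nil =>
      simp at h2; subst h2
      exact List.chain_cons.mpr ⟨hxa, h3⟩
    | cons b l' =>
      rw [List.getLast?_cons_cons] at h2
      exact List.chain_cons.mpr ⟨hxa, ih hal h2 h3⟩

lemma seqFree_step (A : Kripke P R W) {α : Program P R} (hIS : InterSeq α)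
    (hns : ¬ HasSeq α) : ∀ {x y : W}, PRel A α x y → Step A x y := by
  induction hIS with
  | atom a => exact fun h => ⟨a, h⟩
  | seq _ _ _ _ => exact absurd (HasSeq.seq _ _) hns
  | inter h1 h2 ih1 ih2 =>
    exact fun h => ih1 (fun hs => hns (HasSeq.interL _ hs)) h.1

lemma exists_path (A : Kripke P R W) {α : Program P R} (hIS : InterSeq α) :
    ∀ {x y : W}, PRel A α x y →
      ∃ l : List W, l ≠ [] ∧ List.Chain (Step A) x l ∧ l.getLast? = some y := by
  induction hIS with
  | atom a =>
    intro x y h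
    exact ⟨[y], by simp, List.chain_cons.mpr ⟨⟨a, h⟩, List.Chain.nil⟩, by simp⟩
  | seq _ _ ih1 ih2 =>
    rintro x y ⟨m, h1, h2⟩
    obtain ⟨l1, hn1, hc1, hl1⟩ := ih1 h1
    obtain ⟨l2, hn2, hc2, hl2⟩ := ih2 h2
    refine ⟨l1 ++ l2, by simp [hn1], chain_append' hc1 hl1 hc2, ?_⟩
    rw [List.getLast?_append_of_ne_nil _ hn2]; exact hl2
  | inter _ _ ih1 _ => exact fun h => ih1 h.1

lemma gateway_core {A : Kripke P R W} {α : Program P R} (hIS : InterSeq α) :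
    ∀ u w v : W, HasSeq α → PRel A α u w → v ≠ u → v ≠ w →
    (∀ l : List W, l ≠ [] → List.Chain (Step A) u l → l.getLast? = some w → v ∈ l) →
    ∃ β₁ β₂ : Program P R,
      (∀ (W' : Type) (B : Kripke P R W') (x y : W'),
        PRel B (β₁.seq β₂) x y → PRel B α x y) ∧
      PRel A β₁ u v ∧ PRel A β₂ v w := by
  induction hIS with
  | atom a => intro u w v hHS; cases hHS
  | @seq α₁ α₂ h1 h2 ih1 ih2 =>
    intro u w v _ hrel hvu hvw hpath
    obtain ⟨m, hm1, hm2⟩ := hrel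
    by_cases hmv : m = v
    · subst hmv
      exact ⟨α₁, α₂, fun W' B x y h => h, hm1, hm2⟩
    -- dichotomy
    have dich : (∀ l : List W, l ≠ [] → List.Chain (Step A) u l →
          l.getLast? = some m → v ∈ l) ∨
        (∀ l : List W, l ≠ [] → List.Chain (Step A) m l →
          l.getLast? = some w → v ∈ l) := by
      by_contra hcon
      push_neg at hcon
      obtain ⟨⟨l1, hn1, hc1, hl1, hv1⟩, ⟨l2, hn2, hc2, hl2, hv2⟩⟩ := hcon
      have := hpath (l1 ++ l2) (by simp [hn1]) (chain_append' hc1 hl1 hc2)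
        (by rw [List.getLast?_append_of_ne_nil _ hn2]; exact hl2)
      rcases List.mem_append.mp this with h | h
      · exact hv1 h
      · exact hv2 h
    rcases dich with hd | hd
    · -- every positive path u → m passes v
      by_cases hs1 : HasSeq α₁
      · obtain ⟨β₁, β₂, hinc, hb1, hb2⟩ :=
          ih1 u m v hs1 hm1 hvu (fun h => hmv h.symm) hd
        refine ⟨β₁, β₂.seq α₂, ?_, hb1, ⟨m, hb2, hm2⟩⟩
        rintro W' B x y ⟨z, hz1, z', hz2, hz3⟩
        exact ⟨z', hinc W' B x z' ⟨z, hz1, hz2⟩, hz3⟩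
      · -- α₁ seq-free: one-step path from u to m avoids v, contradiction
        obtain ⟨a, ha⟩ := seqFree_step A h1 hs1 hm1
        have := hd [m] (by simp) (List.chain_cons.mpr ⟨⟨a, ha⟩, List.Chain.nil⟩) (by simp)
        simp at this
        exact absurd this.symm hmv
    · by_cases hs2 : HasSeq α₂
      · obtain ⟨β₁, β₂, hinc, hb1, hb2⟩ :=
          ih2 m w v hs2 hm2 (fun h => hmv h.symm) hvw hd
        refine ⟨α₁.seq β₁, β₂, ?_, ⟨m, hm1, hb1⟩, hb2⟩
        rintro W' B x y ⟨z, ⟨z', hz1, hz2⟩, hz3⟩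
        exact ⟨z', hz1, hinc W' B z' y ⟨z, hz2, hz3⟩⟩
      · obtain ⟨a, ha⟩ := seqFree_step A h2 hs2 hm2
        have := hd [w] (by simp) (List.chain_cons.mpr ⟨⟨a, ha⟩, List.Chain.nil⟩) (by simp)
        simp at this
        exact absurd this hvw
  | @inter α₁ α₂ h1 h2 ih1 ih2 =>
    intro u w v _ hrel hvu hvw hpath
    have key : ∀ (γ : Program P R), InterSeq γ → PRel A γ u w →
        (∀ u' w' v' : W, HasSeq γ → PRel A γ u' w' → v' ≠ u' → v' ≠ w' →
          (∀ l : List W, l ≠ [] → List.Chain (Step A) u' l →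
            l.getLast? = some w' → v' ∈ l) →
          ∃ β₁ β₂ : Program P R,
            (∀ (W' : Type) (B : Kripke P R W') (x y : W'),
              PRel B (β₁.seq β₂) x y → PRel B γ x y) ∧
            PRel A β₁ u' v' ∧ PRel A β₂ v' w') →
        ∃ β₁ β₂ : Program P R,
          (∀ (W' : Type) (B : Kripke P R W') (x y : W'),
            PRel B (β₁.seq β₂) x y → PRel B γ x y) ∧
          PRel A β₁ u v ∧ PRel A β₂ v w := by
      intro γ hisγ hrelγ ihγ
      by_cases hsγ : HasSeq γ
      · exact ihγ u w v hsγ hrelγ hvu hvw hpath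
      · obtain ⟨a, ha⟩ := seqFree_step A hisγ hsγ hrelγ
        have := hpath [w] (by simp) (List.chain_cons.mpr ⟨⟨a, ha⟩, List.Chain.nil⟩) (by simp)
        simp at this
        exact absurd this hvw
    obtain ⟨β₁, β₂, hinc1, hb1, hb2⟩ := key α₁ h1 hrel.1 ih1
    obtain ⟨γ₁, γ₂, hinc2, hg1, hg2⟩ := key α₂ h2 hrel.2 ih2
    refine ⟨β₁.inter γ₁, β₂.inter γ₂, ?_, ⟨hb1, hg1⟩, ⟨hb2, hg2⟩⟩
    rintro W' B x y ⟨z, ⟨hz1, hz2⟩, ⟨hz3, hz4⟩⟩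
    exact ⟨hinc1 W' B x y ⟨z, hz1, hz3⟩, hinc2 W' B x y ⟨z, hz2, hz4⟩⟩

end Aux

theorem stmt15_gateway {P R W : Type} (A : Kripke P R W) (α : Program P R)
    (hIS : InterSeq α) (hHS : HasSeq α) (u w v : W)
    -- the whole structure A is a witness graph for u →α w ...
    (hwit : WG A α u w Set.univ {e : R × W × W | A.rel e.1 e.2.1 e.2.2})
    -- ... and it is minimal: every witness graph for u →α w is all of A
    (hmin : ∀ N E, WG A α u w N E →
      Set.univ ⊆ N ∧ {e : R × W × W | A.rel e.1 e.2.1 e.2.2} ⊆ E)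
    (hvu : v ≠ u) (hvw : v ≠ w)
    -- every path of positive length from u to w passes through v
    (hpath : ∀ l : List W, l ≠ [] → List.Chain (Step A) u l → l.getLast? = some w → v ∈ l) :
    ∃ β₁ β₂ : Program P R,
      (∀ (W' : Type) (B : Kripke P R W') (x y : W'),
        PRel B (β₁.seq β₂) x y → PRel B α x y) ∧
      PRel A β₁ u v ∧ PRel A β₂ v w := by
  exact gateway_core hIS u w v hHS (wg_prel hwit) hvu hvw hpath
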